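/- Let F_q be a finite field and C an [n,k]_q linear code with generator matrix G. Define 𝔡 : S_n → ℕ by 𝔡(P) = min{ w(b) : b is a row of the reduced row echelon form of G·M_P }, where M_P is the permutation matrix of P. Then the minimum of 𝔡 over all permutations P ∈ S_n equals the minimum distance d(C) of C. -/

import Mathlib

/-- Hamming weight of a vector: the number of nonzero coordinates. -/
def hWt {F : Type*} [Zero F] [DecidableEq F] {n : ℕ} (v : Fin n → F) : ℕ :=
  (Finset.univ.filter fun i => v i ≠ 0).card

/-- `(i, j)` is a pivot position of `R`: the entry is nonzero and all entries
to its left in the same row vanish. -/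
def IsPivot {F : Type*} [Zero F] {k n : ℕ} (R : Matrix (Fin k) (Fin n) F)
    (i : Fin k) (j : Fin n) : Prop :=
  R i j ≠ 0 ∧ ∀ j' : Fin n, j' < j → R i j' = 0

/-- `R` is in reduced row echelon form. -/
def IsRREF {F : Type*} [Zero F] [One F] {k n : ℕ} (R : Matrix (Fin k) (Fin n) F) : Prop :=
  (∀ i i' : Fin k, i ≤ i' → R i = 0 → R i' = 0) ∧
  (∀ (i : Fin k) (j : Fin n), IsPivot R i j → R i j = 1) ∧
  (∀ (i i' : Fin k) (j j' : Fin n), i < i' → IsPivot R i j → IsPivot R i' j' → j < j') ∧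
  (∀ (i : Fin k) (j : Fin n), IsPivot R i j → ∀ i' : Fin k, i' ≠ i → R i' j = 0)

/-- Minimum distance of a linear code: minimal Hamming weight of a nonzero codeword. -/
noncomputable def minDist {F : Type*} [Field F] [DecidableEq F] {n : ℕ}
    (C : Submodule F (Fin n → F)) : ℕ :=
  sInf {d : ℕ | ∃ c ∈ C, c ≠ 0 ∧ hWt c = d}

/-!
Every row of a matrix `A * G * M_P` with `A` invertible is a nonzero codeword with permuted
coordinates, so every fitness value is at least `d(C)`. Conversely, let `c` be a codeword of
weight `d(C)` and `P` a permutation moving the zero coordinates of `c` to the front, so that the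
support of `c ∘ P` is a final segment. Write `c ∘ P` as a combination of the rows of an RREF of
`G * M_P` and pick a row with nonzero coefficient. All other rows vanish at its pivot `j`, so
`c ∘ P` does not vanish at `j`, hence on all coordinates `≥ j`; these contain the support of
that row, whose weight is therefore at most `d(C)`.

An RREF of a matrix with independent rows is `B⁻¹ * G`, where `B` consists of the columns of `G`
that are not in the span of the columns before them.
-/

open Set Submodule Matrix

section Pivots

variable {K V ι : Type*} [DivisionRing K] [AddCommGroup V] [Module K V] [LinearOrder ι]

variable (K) in
def pivotIndices (v : ι → V) : Set ι :=
  {i | v i ∉ span K (v '' Iio i)}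

theorem linearIndepOn_pivotIndices (v : ι → V) : LinearIndepOn K v (pivotIndices K v) := by
  classical
  refine linearIndepOn_of_finite _ fun t hts ht => ?_
  lift t to Finset ι using ht
  induction t using Finset.induction_on_max with
  | empty => simp
  | insert a s has ih =>
    push_cast at hts ⊢
    rw [linearIndepOn_insert fun ha => (has a ha).false]
    refine ⟨ih ((subset_insert _ _).trans hts), fun hspan => hts (mem_insert _ _) ?_⟩
    exact span_mono (image_mono fun x hx => has x hx) hspan

theorem mem_span_image_pivotIndices_inter_Iic [WellFoundedLT ι] (v : ι → V) (i : ι) :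
    v i ∈ span K (v '' (pivotIndices K v ∩ Iic i)) := by
  induction i using WellFoundedLT.induction with
  | _ i ih =>
  by_cases hi : i ∈ pivotIndices K v
  · exact subset_span ⟨i, ⟨hi, le_rfl⟩, rfl⟩
  · refine span_le.mpr ?_ (not_not.mp hi)
    rintro _ ⟨j, hj, rfl⟩
    exact span_mono (image_mono (inter_subset_inter_right _ (Iic_subset_Iic.mpr hj.le))) (ih j hj)

theorem span_image_pivotIndices [WellFoundedLT ι] (v : ι → V) :
    span K (v '' pivotIndices K v) = span K (range v) := by
  refine le_antisymm (span_mono (image_subset_range _ _)) (span_le.mpr ?_)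
  rintro _ ⟨i, rfl⟩
  exact span_mono (image_mono inter_subset_left) (mem_span_image_pivotIndices_inter_Iic v i)

theorem ncard_pivotIndices [Fintype ι] (v : ι → V) :
    (pivotIndices K v).ncard = Module.finrank K (span K (range v)) := by
  classical
  set S := (pivotIndices K v).toFinset
  set p := S.orderEmbOfFin rfl
  have hrange : range p = pivotIndices K v := by simp [p, S]
  have hli : LinearIndependent K (v ∘ p) :=
    (linearIndepOn_range_iff p.injective v).mp (hrange ▸ linearIndepOn_pivotIndices v)
  calc (pivotIndices K v).ncard = Fintype.card (Fin S.card) := by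
        rw [Fintype.card_fin, Set.ncard_eq_toFinset_card']
    _ = Module.finrank K (span K (range v)) := by
        rw [← finrank_span_eq_card hli, range_comp, hrange, span_image_pivotIndices]

end Pivots

section RREF

variable {F : Type*} {k n : ℕ}

theorem exists_isPivot [Zero F] {R : Matrix (Fin k) (Fin n) F} {i : Fin k} (hi : R i ≠ 0) :
    ∃ j, IsPivot R i j := by
  obtain ⟨j, hj, hmin⟩ := wellFounded_lt.has_min {j | R i j ≠ 0} (Function.ne_iff.mp hi)
  exact ⟨j, hj, fun j' hj' => not_not.mp fun hne => hmin j' hne hj'⟩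

section PivotColumns

variable [Zero F] [One F] [NeZero (1 : F)] {R : Matrix (Fin k) (Fin n) F} {p : Fin k → Fin n}

theorem isPivot_iff_eq_of_submatrix_eq_one (hpiv : R.submatrix id p = 1)
    (hleft : ∀ i j, j < p i → R i j = 0) {i : Fin k} {j : Fin n} :
    IsPivot R i j ↔ j = p i := by
  have hdiag : R i (p i) = 1 := by simpa using congrFun (congrFun hpiv i) i
  constructor
  · rintro ⟨hne, hzero⟩
    refine le_antisymm (not_lt.mp fun hlt => ?_) (not_lt.mp fun hlt => hne (hleft i j hlt))
    exact one_ne_zero (hdiag ▸ hzero (p i) hlt)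
  · rintro rfl
    exact ⟨hdiag ▸ one_ne_zero, hleft i⟩

theorem isRREF_of_submatrix_eq_one (hp : StrictMono p) (hpiv : R.submatrix id p = 1)
    (hleft : ∀ i j, j < p i → R i j = 0) : IsRREF R := by
  have hentry : ∀ i l, R i (p l) = (1 : Matrix (Fin k) (Fin k) F) i l := fun i l =>
    congrFun (congrFun hpiv i) l
  simp only [IsRREF, isPivot_iff_eq_of_submatrix_eq_one hpiv hleft]
  refine ⟨fun i _ _ h0 => ?_, ?_, ?_, ?_⟩
  · simpa [hentry] using congrFun h0 (p i)
  · rintro i _ rfl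
    simpa using hentry i i
  · rintro i i' _ _ hii' rfl rfl
    exact hp hii'
  · rintro i _ rfl i' hi'
    simpa [hi'] using hentry i' i

end PivotColumns

theorem exists_isUnit_isRREF_mul [Field F] (G : Matrix (Fin k) (Fin n) F)
    (hG : LinearIndependent F G.row) :
    ∃ A : Matrix (Fin k) (Fin k) F, IsUnit A ∧ IsRREF (A * G) := by
  classical
  set S := (pivotIndices F G.col).toFinset
  have hcard : S.card = k := by
    rw [← Set.ncard_eq_toFinset_card', ncard_pivotIndices, ← rank_eq_finrank_span_cols,
      hG.rank_matrix, Fintype.card_fin]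
  set p := S.orderEmbOfFin hcard
  have hrange : range p = pivotIndices F G.col := by simp [p, S]
  set B := G.submatrix id p
  have hB : IsUnit B := linearIndependent_cols_iff_isUnit.mp <|
    (linearIndepOn_range_iff p.injective G.col).mp (hrange ▸ linearIndepOn_pivotIndices G.col)
  have hpiv : (B⁻¹ * G).submatrix id p = 1 :=
    nonsing_inv_mul B ((isUnit_iff_isUnit_det B).mp hB)
  refine ⟨B⁻¹, isUnit_nonsing_inv_iff.mpr hB,
    isRREF_of_submatrix_eq_one p.strictMono hpiv ?_⟩
  intro i j hj
  -- `R i j = φ (G.col j)`, and `φ` kills every pivot column `p l` with `p l ≤ j < p i`.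
  let φ : (Fin k → F) →ₗ[F] F := LinearMap.proj i ∘ₗ B⁻¹.mulVecLin
  suffices G.col j ∈ LinearMap.ker φ from this
  refine span_le.mpr ?_ (mem_span_image_pivotIndices_inter_Iic G.col j)
  rintro _ ⟨_, ⟨hl, hlj⟩, rfl⟩
  obtain ⟨l, rfl⟩ := hrange ▸ hl
  have hli : l ≠ i := by
    rintro rfl
    exact hlj.not_gt hj
  show (B⁻¹ * G) i (p l) = 0
  simpa [one_apply_ne hli.symm] using congrFun (congrFun hpiv i) l

end RREF

section Weight

variable {F : Type*} [DecidableEq F] {n : ℕ}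

theorem hWt_comp_equiv [Zero F] (v : Fin n → F) (σ : Fin n ≃ Fin n) : hWt (v ∘ σ) = hWt v :=
  Finset.card_equiv σ (by simp)

theorem hWt_vecMul_permMatrix [CommRing F] (v : Fin n → F) (σ : Equiv.Perm (Fin n)) :
    hWt (v ᵥ* σ.permMatrix F) = hWt v := by
  rw [vecMul_permMatrix, hWt_comp_equiv]

theorem minDist_le_hWt [Field F] {C : Submodule F (Fin n → F)} {c : Fin n → F} (hc : c ∈ C)
    (hc0 : c ≠ 0) : minDist C ≤ hWt c :=
  Nat.sInf_le ⟨c, hc, hc0, rfl⟩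

theorem exists_hWt_eq_minDist [Field F] {C : Submodule F (Fin n → F)} (hC : C ≠ ⊥) :
    ∃ c ∈ C, c ≠ 0 ∧ hWt c = minDist C := by
  obtain ⟨c, hc, hc0⟩ := exists_mem_ne_zero_of_ne_bot hC
  exact Nat.sInf_mem (s := {d | ∃ c ∈ C, c ≠ 0 ∧ hWt c = d}) ⟨_, c, hc, hc0, rfl⟩

theorem IsRREF.exists_hWt_le [Field F] {k : ℕ} {R : Matrix (Fin k) (Fin n) F} (hR : IsRREF R)
    {x : Fin k → F} (hx : x ᵥ* R ≠ 0) (hmono : Monotone fun j => (x ᵥ* R) j ≠ 0) :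
    ∃ i, hWt (R i) ≤ hWt (x ᵥ* R) := by
  obtain ⟨i, -, hi⟩ : ∃ i ∈ Finset.univ, x i • R i ≠ 0 :=
    Finset.exists_ne_zero_of_sum_ne_zero (by rwa [← vecMul_eq_sum])
  obtain ⟨j, hj⟩ := exists_isPivot (right_ne_zero_of_smul hi)
  have hxj : (x ᵥ* R) j ≠ 0 := by
    rw [vecMul_eq_sum, Finset.sum_apply, Finset.sum_eq_single i
      (fun i' _ hi' => by simp [hR.2.2.2 i j hj i' hi']) (by simp)]
    exact smul_ne_zero (left_ne_zero_of_smul hi) hj.1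
  refine ⟨i, Finset.card_le_card fun j' => ?_⟩
  simp only [Finset.mem_filter, Finset.mem_univ, true_and]
  exact fun hj' => hmono (not_lt.mp fun hlt => hj' (hj.2 j' hlt)) hxj

end Weight

-- `Prop` is ordered by implication: the zero coordinates of `v ∘ σ` come first.
theorem exists_perm_monotone_ne_zero {M : Type*} [Zero M] {n : ℕ} (v : Fin n → M) :
    ∃ σ : Equiv.Perm (Fin n), Monotone fun j => v (σ j) ≠ 0 :=
  ⟨_, Tuple.monotone_sort fun j => v j ≠ 0⟩

section Fitness

variable {F : Type*} [Field F] [DecidableEq F] {n k : ℕ}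

theorem exists_isRREF_mul_permMatrix_hWt_le (G : Matrix (Fin k) (Fin n) F)
    (hG : LinearIndependent F G.row) {x : Fin k → F} (hx : x ᵥ* G ≠ 0) :
    ∃ (P : Equiv.Perm (Fin n)) (A : Matrix (Fin k) (Fin k) F), IsUnit A ∧
      IsRREF (A * (G * P.permMatrix F)) ∧
      ∃ i, hWt ((A * (G * P.permMatrix F)) i) ≤ hWt (x ᵥ* G) := by
  obtain ⟨σ, hσ⟩ := exists_perm_monotone_ne_zero (x ᵥ* G)
  set G' := G * Equiv.Perm.permMatrix F σ.symm
  have hG' : LinearIndependent F G'.row := by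
    rw [← vecMul_injective_iff] at hG ⊢
    intro u w huw
    simp only [G', ← vecMul_vecMul, vecMul_permMatrix, Equiv.symm_symm] at huw
    exact hG (σ.surjective.injective_comp_right huw)
  obtain ⟨A, hA, hR⟩ := exists_isUnit_isRREF_mul G' hG'
  have hy : (x ᵥ* A⁻¹) ᵥ* (A * G') = (x ᵥ* G) ∘ σ := by
    rw [vecMul_vecMul, ← Matrix.mul_assoc, nonsing_inv_mul A ((isUnit_iff_isUnit_det A).mp hA),
      Matrix.one_mul, ← vecMul_vecMul, vecMul_permMatrix, Equiv.symm_symm]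
  have hne : (x ᵥ* G) ∘ σ ≠ 0 := fun h => hx (by ext j; simpa using congrFun h (σ.symm j))
  obtain ⟨i, hi⟩ := hR.exists_hWt_le (x := x ᵥ* A⁻¹) (hy ▸ hne) (hy ▸ hσ)
  refine ⟨σ.symm, A, hA, hR, i, hi.trans_eq ?_⟩
  rw [hy, hWt_comp_equiv]

theorem minDist_le_hWt_row_mul_permMatrix {C : Submodule F (Fin n → F)}
    {G : Matrix (Fin k) (Fin n) F} (hG : LinearIndependent F G.row) (hGC : ∀ x, x ᵥ* G ∈ C)
    {A : Matrix (Fin k) (Fin k) F} (hA : IsUnit A) (P : Equiv.Perm (Fin n)) (i : Fin k) :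
    minDist C ≤ hWt ((A * (G * P.permMatrix F)) i) := by
  rw [mul_apply_eq_vecMul, ← vecMul_vecMul, hWt_vecMul_permMatrix]
  refine minDist_le_hWt (hGC _) fun h0 => ?_
  exact (linearIndependent_rows_iff_isUnit.mpr hA).ne_zero i
    (vecMul_injective_iff.mpr hG (h0.trans (zero_vecMul G).symm))

end Fitness

theorem sInf_fitness_eq_minDist_general
    {F : Type*} [Field F] [DecidableEq F] {n k : ℕ} (hk : 0 < k)
    (C : Submodule F (Fin n → F)) (G : Matrix (Fin k) (Fin n) F)
    (hGli : LinearIndependent F (fun i : Fin k => G i))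
    (hGspan : Submodule.span F (Set.range fun i : Fin k => G i) = C) :
    sInf {d : ℕ | ∃ (P : Equiv.Perm (Fin n)) (R : Matrix (Fin k) (Fin n) F),
        IsRREF R ∧
        (∃ A : Matrix (Fin k) (Fin k) F, IsUnit A ∧ R = A * (G * P.permMatrix F)) ∧
        d = sInf {w : ℕ | ∃ i : Fin k, hWt (R i) = w}} = minDist C := by
  have hcode : ∀ c, c ∈ C ↔ ∃ x, x ᵥ* G = c := fun c => by
    rw [← hGspan, ← G.row_def, ← range_vecMulLinear, LinearMap.mem_range]
    rfl
  have hC : C ≠ ⊥ := (Submodule.ne_bot_iff C).mpr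
    ⟨G ⟨0, hk⟩, hGspan ▸ subset_span ⟨_, rfl⟩, hGli.ne_zero _⟩
  obtain ⟨c, hcC, hc0, hcw⟩ := exists_hWt_eq_minDist hC
  obtain ⟨x, rfl⟩ := (hcode c).mp hcC
  obtain ⟨P, A, hA, hR, i, hi⟩ := exists_isRREF_mul_permMatrix_hWt_le G hGli hc0
  apply le_antisymm
  · calc _ ≤ sInf {w | ∃ i, hWt ((A * (G * P.permMatrix F)) i) = w} :=
          Nat.sInf_le (by exact ⟨P, _, hR, ⟨A, hA, rfl⟩, rfl⟩)
      _ ≤ hWt ((A * (G * P.permMatrix F)) i) := Nat.sInf_le ⟨i, rfl⟩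
      _ ≤ minDist C := hi.trans_eq hcw
  · refine le_csInf ⟨_, P, _, hR, ⟨A, hA, rfl⟩, rfl⟩ ?_
    rintro _ ⟨P', _, -, ⟨A', hA', rfl⟩, rfl⟩
    refine le_csInf ⟨_, ⟨0, hk⟩, rfl⟩ ?_
    rintro _ ⟨i', rfl⟩
    exact minDist_le_hWt_row_mul_permMatrix hGli (fun x => (hcode _).mpr ⟨x, rfl⟩) hA' P' i'

/-- The minimum over all permutations `P ∈ S_n` of the fitness
`𝔡(P) = min { w(b) : b a row of the RREF of G·M_P }` equals the minimum distance of `C`. -/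
theorem sInf_fitness_eq_minDist
    {F : Type*} [Field F] [Fintype F] [DecidableEq F] {n k : ℕ} (hk : 0 < k)
    (C : Submodule F (Fin n → F)) (G : Matrix (Fin k) (Fin n) F)
    (hGli : LinearIndependent F (fun i : Fin k => G i))
    (hGspan : Submodule.span F (Set.range fun i : Fin k => G i) = C) :
    sInf {d : ℕ | ∃ (P : Equiv.Perm (Fin n)) (R : Matrix (Fin k) (Fin n) F),
        IsRREF R ∧
        (∃ A : Matrix (Fin k) (Fin k) F, IsUnit A ∧ R = A * (G * P.permMatrix F)) ∧
        d = sInf {w : ℕ | ∃ i : Fin k, hWt (R i) = w}} = minDist C :=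
  sInf_fitness_eq_minDist_general hk C G hGli hGspan
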